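/- arXiv:1302.3238 — 3 statements merged into one kernel-verified Lean document; each statement's English description precedes it below -/
import Mathlib

section
/- Let {x_{ki} : 1 ≤ k ≤ N, 1 ≤ i ≤ n} be independent real random variables such that for each k the variables x_{k1}, …, x_{kn} are identically distributed with common distribution F_k having finite variance. Let t_n^{(k)} = x̄_k − E[x̄_k | x_{k1} − x̄_k, …, x_{kn} − x̄_k] be the Pitman estimator from the k-th row, and let t_n = ȳ − E[ȳ | y_1 − ȳ, …, y_n − ȳ] be the Pitman estimator from the sample y_i = Σ_{k=1}^{N} x_{ki}, i = 1, …, n, which is a sample of size n from the convolution F = F_1 ∗ … ∗ F_N. Then Var(t_n) ≥ Var(t_n^{(1)}) + … + Var(t_n^{(N)}). -/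
/-!
Let `R_k` be the σ-algebra of the residuals of row `k` and `V = ⨆ k, R_k`. Row `k` is independent
of the residuals of the other rows, so `E[x̄_k | V] = E[x̄_k | R_k]`; hence
`ȳ - E[ȳ | V] = Σ_k t^{(k)}`, a sum of independent terms with variance `Σ_k Var t^{(k)}`.
The residuals of `y` are the sums of the row residuals, so `σ(y - ȳ) ≤ V`, and for `U ≤ V` the
law of total variance with the tower property gives `Var(X - E[X|V]) ≤ Var(X - E[X|U])`.
-/

open MeasureTheory ProbabilityTheory Finset

/-- The Pitman estimator (evaluated at `θ = 0`) from the sample `Z i`, `i : ι`: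
`t = Z̄ - E[Z̄ | residual vector]`. -/
noncomputable def pitman {Ω : Type*} [MeasureSpace Ω] {ι : Type*} [Fintype ι]
    (Z : ι → Ω → ℝ) : Ω → ℝ :=
  fun ω =>
    (∑ i, Z i ω) / (Fintype.card ι : ℝ) -
      (ℙ[fun ω' => (∑ i, Z i ω') / (Fintype.card ι : ℝ) |
        MeasurableSpace.comap
          (fun ω' i => Z i ω' - (∑ j, Z j ω') / (Fintype.card ι : ℝ)) inferInstance]) ω

section Variance

variable {Ω : Type*} {m m₁ m₂ mΩ : MeasurableSpace Ω} {μ : Measure[mΩ] Ω}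
  [IsProbabilityMeasure μ] {X : Ω → ℝ}

lemma variance_condExp_le (hm : m ≤ mΩ) (hX : MemLp X 2 μ) : Var[μ[X|m]; μ] ≤ Var[X; μ] := by
  have hcondVar : 0 ≤ μ[Var[X; μ | m]] := integral_nonneg_of_ae (condExp_nonneg
    (ae_of_all _ fun ω => sq_nonneg ((X - μ[X|m]) ω)))
  linarith [integral_condVar_add_variance_condExp hm hX]

lemma variance_sub_condExp (hm : m ≤ mΩ) (hX : MemLp X 2 μ) :
    Var[X - μ[X|m]; μ] = Var[X; μ] - Var[μ[X|m]; μ] := by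
  have hmean : μ[X - μ[X|m]] = 0 := by
    rw [integral_sub' (hX.integrable one_le_two) integrable_condExp, integral_condExp hm, sub_self]
  have hcondVar : μ[Var[X; μ | m]] = Var[X - μ[X|m]; μ] := by
    rw [variance_of_integral_eq_zero (hX.sub (hX.condExp one_le_two)).aemeasurable hmean,
      condVar, integral_condExp hm]
    rfl
  linarith [integral_condVar_add_variance_condExp hm hX]

lemma variance_sub_condExp_le_of_le (h₁₂ : m₁ ≤ m₂) (h₂ : m₂ ≤ mΩ) (hX : MemLp X 2 μ) :
    Var[X - μ[X|m₂]; μ] ≤ Var[X - μ[X|m₁]; μ] := by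
  have htower : Var[μ[X|m₁]; μ] = Var[μ[μ[X|m₂]|m₁]; μ] :=
    variance_congr (condExp_condExp_of_le h₁₂ h₂).symm
  rw [variance_sub_condExp h₂ hX, variance_sub_condExp (h₁₂.trans h₂) hX, htower]
  linarith [variance_condExp_le (h₁₂.trans h₂) (hX.condExp one_le_two (m := m₂))]

end Variance

section CondExpIndep

variable {Ω E : Type*} [NormedAddCommGroup E] [NormedSpace ℝ E]
  {m mf m₁ m₂ mΩ : MeasurableSpace Ω} {μ : Measure[mΩ] Ω}

lemma isPiSystem_image2_inter_measurableSet :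
    IsPiSystem (Set.image2 (· ∩ ·) {s | MeasurableSet[m₁] s} {s | MeasurableSet[m₂] s}) := by
  rintro _ ⟨s₁, hs₁, s₂, hs₂, rfl⟩ _ ⟨t₁, ht₁, t₂, ht₂, rfl⟩ _
  exact ⟨s₁ ∩ t₁, hs₁.inter ht₁, s₂ ∩ t₂, hs₂.inter ht₂, Set.inter_inter_inter_comm _ _ _ _⟩

lemma sup_eq_generateFrom_image2_inter :
    m₁ ⊔ m₂ = MeasurableSpace.generateFrom
      (Set.image2 (· ∩ ·) {s | MeasurableSet[m₁] s} {s | MeasurableSet[m₂] s}) := by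
  refine le_antisymm (sup_le (fun s hs => ?_) (fun s hs => ?_)) ?_
  · exact MeasurableSpace.measurableSet_generateFrom ⟨s, hs, Set.univ, .univ, Set.inter_univ s⟩
  · exact MeasurableSpace.measurableSet_generateFrom ⟨Set.univ, .univ, s, hs, Set.univ_inter s⟩
  · refine MeasurableSpace.generateFrom_le ?_
    rintro _ ⟨s₁, hs₁, s₂, hs₂, rfl⟩
    exact (le_sup_left (b := m₂) _ hs₁).inter (le_sup_right (a := m₁) _ hs₂)

lemma setIntegral_eq_of_isPiSystem (hm : m ≤ mΩ) {p : Set (Set Ω)}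
    (hgen : m = MeasurableSpace.generateFrom p) (hp : IsPiSystem p) {f g : Ω → E}
    (hf : Integrable f μ) (hg : Integrable g μ) (huniv : ∫ ω, f ω ∂μ = ∫ ω, g ω ∂μ)
    (hbasic : ∀ s ∈ p, ∫ ω in s, f ω ∂μ = ∫ ω in s, g ω ∂μ) {s : Set Ω}
    (hs : MeasurableSet[m] s) : ∫ ω in s, f ω ∂μ = ∫ ω in s, g ω ∂μ := by
  induction s, hs using MeasurableSpace.induction_on_inter hgen hp with
  | empty => simp
  | basic t ht => exact hbasic t ht
  | compl t ht iht =>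
    rw [eq_sub_of_add_eq' (integral_add_compl (hm _ ht) hf),
      eq_sub_of_add_eq' (integral_add_compl (hm _ ht) hg), huniv, iht]
  | iUnion t hdisj ht iht =>
    rw [integral_iUnion (fun i => hm _ (ht i)) hdisj hf.integrableOn,
      integral_iUnion (fun i => hm _ (ht i)) hdisj hg.integrableOn]
    exact tsum_congr iht

variable [CompleteSpace E] [IsFiniteMeasure μ]

lemma setIntegral_inter_eq_smul_of_indep (hm₁ : m₁ ≤ mΩ) (hm₂ : m₂ ≤ mΩ)
    (hindep : Indep m₁ m₂ μ) {f : Ω → E} (hfm : StronglyMeasurable[m₁] f) (hf : Integrable f μ)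
    {s₁ s₂ : Set Ω} (hs₁ : MeasurableSet[m₁] s₁) (hs₂ : MeasurableSet[m₂] s₂) :
    ∫ ω in s₁ ∩ s₂, f ω ∂μ = μ.real s₂ • ∫ ω in s₁, f ω ∂μ := by
  calc ∫ ω in s₁ ∩ s₂, f ω ∂μ
      = ∫ ω in s₂, s₁.indicator f ω ∂μ := by
        rw [setIntegral_indicator (hm₁ _ hs₁), Set.inter_comm]
    _ = ∫ ω in s₂, (μ[s₁.indicator f | m₂]) ω ∂μ :=
        (setIntegral_condExp hm₂ (hf.indicator (hm₁ _ hs₁)) hs₂).symm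
    _ = ∫ ω in s₂, μ[s₁.indicator f] ∂μ := by
        refine setIntegral_congr_ae (hm₂ _ hs₂) ?_
        filter_upwards [condExp_indep_eq hm₁ hm₂ (hfm.indicator hs₁) hindep] with ω hω _
        exact hω
    _ = μ.real s₂ • ∫ ω in s₁, f ω ∂μ := by
        rw [setIntegral_const, integral_indicator (hm₁ _ hs₁)]

lemma condExp_sup_ae_eq_of_indep (h₁ : m₁ ≤ mf) (hf : mf ≤ mΩ) (h₂ : m₂ ≤ mΩ)
    (hindep : Indep mf m₂ μ) {f : Ω → E} (hfm : StronglyMeasurable[mf] f)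
    (hfi : Integrable f μ) :
    μ[f|m₁ ⊔ m₂] =ᵐ[μ] μ[f|m₁] := by
  have hm₁ : m₁ ≤ mΩ := h₁.trans hf
  have hbasic : ∀ s ∈ Set.image2 (· ∩ ·) {s | MeasurableSet[m₁] s} {s | MeasurableSet[m₂] s},
      ∫ ω in s, (μ[f|m₁]) ω ∂μ = ∫ ω in s, f ω ∂μ := by
    rintro _ ⟨s₁, hs₁, s₂, hs₂, rfl⟩
    rw [setIntegral_inter_eq_smul_of_indep hf h₂ hindep
        (stronglyMeasurable_condExp.mono h₁) integrable_condExp (h₁ _ hs₁) hs₂,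
      setIntegral_inter_eq_smul_of_indep hf h₂ hindep hfm hfi (h₁ _ hs₁) hs₂,
      setIntegral_condExp hm₁ hfi hs₁]
  have hgm : AEStronglyMeasurable[m₁ ⊔ m₂] (μ[f|m₁]) μ :=
    (stronglyMeasurable_condExp.mono (le_sup_left : m₁ ≤ m₁ ⊔ m₂)).aestronglyMeasurable
  refine (ae_eq_condExp_of_forall_setIntegral_eq (sup_le hm₁ h₂) hfi
    (fun s _ _ => integrable_condExp.integrableOn) (fun s hs _ => ?_) hgm).symm
  exact setIntegral_eq_of_isPiSystem (sup_le hm₁ h₂) sup_eq_generateFrom_image2_inter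
    isPiSystem_image2_inter_measurableSet integrable_condExp hfi (integral_condExp hm₁) hbasic hs

end CondExpIndep

section Sample

variable {Ω ι : Type*}

abbrev sampleSigma (Z : ι → Ω → ℝ) : MeasurableSpace Ω :=
  MeasurableSpace.comap (fun ω i => Z i ω) MeasurableSpace.pi

lemma sampleSigma_eq_iSup (Z : ι → Ω → ℝ) :
    sampleSigma Z = ⨆ i, MeasurableSpace.comap (Z i) Real.measurableSpace := by
  simp_rw [sampleSigma, MeasurableSpace.pi, MeasurableSpace.comap_iSup,
    MeasurableSpace.comap_comp, Function.comp_def]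

lemma sampleSigma_le [mΩ : MeasurableSpace Ω] {Z : ι → Ω → ℝ} (hZ : ∀ i, Measurable (Z i)) :
    sampleSigma Z ≤ mΩ :=
  (measurable_pi_lambda _ hZ).comap_le

variable [Fintype ι]

noncomputable def sampleMean (Z : ι → Ω → ℝ) : Ω → ℝ :=
  fun ω => (∑ i, Z i ω) / (Fintype.card ι : ℝ)

noncomputable def sampleResidual (Z : ι → Ω → ℝ) : Ω → ι → ℝ :=
  fun ω i => Z i ω - sampleMean Z ω

noncomputable abbrev residualSigma (Z : ι → Ω → ℝ) : MeasurableSpace Ω :=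
  MeasurableSpace.comap (sampleResidual Z) MeasurableSpace.pi

lemma pitman_eq [MeasureSpace Ω] (Z : ι → Ω → ℝ) :
    pitman Z = sampleMean Z - ℙ[sampleMean Z | residualSigma Z] :=
  rfl

lemma measurable_sampleMean (Z : ι → Ω → ℝ) : Measurable[sampleSigma Z] (sampleMean Z) :=
  ((Finset.measurable_sum univ fun i _ => measurable_pi_apply i).div_const _).comp
    (comap_measurable _)

lemma measurable_sampleResidual (Z : ι → Ω → ℝ) :
    Measurable[sampleSigma Z] (sampleResidual Z) := by
  have hφ : Measurable fun (v : ι → ℝ) i => v i - (∑ j, v j) / (Fintype.card ι : ℝ) :=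
    measurable_pi_lambda _ fun i => (measurable_pi_apply i).sub
      ((Finset.measurable_sum univ fun j _ => measurable_pi_apply j).div_const _)
  exact hφ.comp (comap_measurable _)

lemma residualSigma_le_sampleSigma (Z : ι → Ω → ℝ) : residualSigma Z ≤ sampleSigma Z :=
  (measurable_sampleResidual Z).comap_le

lemma memLp_sampleMean [MeasurableSpace Ω] {μ : Measure Ω} {p : ENNReal} {Z : ι → Ω → ℝ}
    (hZ : ∀ i, MemLp (Z i) p μ) : MemLp (sampleMean Z) p μ := by
  unfold sampleMean
  simpa only [div_eq_mul_inv] using (memLp_finsetSum univ fun i _ => hZ i).mul_const _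

variable [MeasureSpace Ω]

lemma measurable_pitman (Z : ι → Ω → ℝ) : Measurable[sampleSigma Z] (pitman Z) :=
  (measurable_sampleMean Z).sub
    (stronglyMeasurable_condExp.mono (residualSigma_le_sampleSigma Z)).measurable

lemma memLp_pitman [IsFiniteMeasure (ℙ : Measure Ω)] {Z : ι → Ω → ℝ}
    (hZ : ∀ i, MemLp (Z i) 2 ℙ) : MemLp (pitman Z) 2 ℙ :=
  (memLp_sampleMean hZ).sub ((memLp_sampleMean hZ).condExp one_le_two)

end Sample

section Rows

variable {Ω κ ι : Type*}

lemma sampleSigma_le_biSup_comap (x : κ → ι → Ω → ℝ) {S : Set (κ × ι)} {k : κ}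
    (hS : ∀ i, (k, i) ∈ S) :
    sampleSigma (x k) ≤ ⨆ p ∈ S, MeasurableSpace.comap (x p.1 p.2) Real.measurableSpace := by
  rw [sampleSigma_eq_iSup]
  exact iSup_le fun i =>
    le_iSup₂ (f := fun p (_ : p ∈ S) => MeasurableSpace.comap (x p.1 p.2) _) (k, i) (hS i)

lemma indep_sampleSigma_iSup_ne [MeasurableSpace Ω] {μ : Measure Ω} {x : κ → ι → Ω → ℝ}
    (hmeas : ∀ k i, Measurable (x k i)) (hindep : iIndepFun (fun p : κ × ι => x p.1 p.2) μ)
    (k : κ) : Indep (sampleSigma (x k)) (⨆ j, ⨆ (_ : j ≠ k), sampleSigma (x j)) μ := by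
  have h := indep_iSup_of_disjoint (fun p => (hmeas p.1 p.2).comap_le) hindep.iIndep
    (S := {p : κ × ι | p.1 = k}) (T := {p : κ × ι | p.1 ≠ k})
    (Set.disjoint_left.2 fun _ h₁ h₂ => h₂ h₁)
  exact indep_of_indep_of_le_right
    (indep_of_indep_of_le_left h (sampleSigma_le_biSup_comap x fun _ => rfl))
    (iSup₂_le fun j hj => sampleSigma_le_biSup_comap x fun _ => hj)

variable [Fintype κ] [Fintype ι]

lemma sampleMean_sum (x : κ → ι → Ω → ℝ) :
    sampleMean (fun i ω => ∑ k, x k i ω) = ∑ k, sampleMean (x k) := by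
  ext ω
  simp only [sampleMean, Finset.sum_apply, ← Finset.sum_div]
  rw [Finset.sum_comm]

lemma sampleResidual_sum (x : κ → ι → Ω → ℝ) :
    sampleResidual (fun i ω => ∑ k, x k i ω) = fun ω => ∑ k, sampleResidual (x k) ω := by
  ext ω i
  simp only [sampleResidual, sampleMean_sum, Finset.sum_apply, Finset.sum_sub_distrib]

lemma residualSigma_sum_le (x : κ → ι → Ω → ℝ) :
    residualSigma (fun i ω => ∑ k, x k i ω) ≤ ⨆ k, residualSigma (x k) := by
  have h : Measurable[⨆ k, residualSigma (x k)] fun ω => ∑ k, sampleResidual (x k) ω :=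
    Finset.measurable_sum univ fun k _ =>
      (comap_measurable _).mono (le_iSup (fun k => residualSigma (x k)) k) le_rfl
  rw [residualSigma, sampleResidual_sum]
  exact h.comap_le

end Rows

section PitmanRows

variable {Ω κ ι : Type*} [Fintype ι] [MeasureSpace Ω] {x : κ → ι → Ω → ℝ}

lemma indepFun_pitman (hmeas : ∀ k i, Measurable (x k i))
    (hindep : iIndepFun (fun p : κ × ι => x p.1 p.2) ℙ) {j k : κ} (hjk : j ≠ k) :
    IndepFun (pitman (x j)) (pitman (x k)) ℙ :=
  (IndepFun_iff_Indep _ _ _).2 <| indep_of_indep_of_le_right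
    (indep_of_indep_of_le_left (indep_sampleSigma_iSup_ne hmeas hindep k).symm
      ((measurable_pitman (x j)).comap_le.trans
        (le_iSup₂ (f := fun j (_ : j ≠ k) => sampleSigma (x j)) j hjk)))
    (measurable_pitman (x k)).comap_le

variable [IsProbabilityMeasure (ℙ : Measure Ω)]

lemma condExp_sampleMean_iSup_residualSigma (hmeas : ∀ k i, Measurable (x k i))
    (hindep : iIndepFun (fun p : κ × ι => x p.1 p.2) ℙ) (hL2 : ∀ k i, MemLp (x k i) 2 ℙ)
    (k : κ) :
    ℙ[sampleMean (x k) | ⨆ j, residualSigma (x j)] =ᵐ[ℙ]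
      ℙ[sampleMean (x k) | residualSigma (x k)] := by
  rw [iSup_split_single _ k]
  exact condExp_sup_ae_eq_of_indep (residualSigma_le_sampleSigma _) (sampleSigma_le (hmeas k))
    (iSup₂_le fun j _ => (residualSigma_le_sampleSigma _).trans (sampleSigma_le (hmeas j)))
    (indep_of_indep_of_le_right (indep_sampleSigma_iSup_ne hmeas hindep k)
      (iSup₂_mono fun j _ => residualSigma_le_sampleSigma _))
    (measurable_sampleMean _).stronglyMeasurable
    ((memLp_sampleMean (hL2 k)).integrable one_le_two)

lemma sum_pitman_ae_eq [Fintype κ] (hmeas : ∀ k i, Measurable (x k i))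
    (hindep : iIndepFun (fun p : κ × ι => x p.1 p.2) ℙ) (hL2 : ∀ k i, MemLp (x k i) 2 ℙ) :
    ∑ k, pitman (x k) =ᵐ[ℙ] sampleMean (fun i ω => ∑ k, x k i ω) -
      ℙ[sampleMean (fun i ω => ∑ k, x k i ω) | ⨆ k, residualSigma (x k)] := by
  have hsum := condExp_finsetSum (s := univ) (μ := ℙ)
    (fun k _ => (memLp_sampleMean (hL2 k)).integrable one_le_two) (⨆ k, residualSigma (x k))
  have hrow := ae_all_iff.2 (condExp_sampleMean_iSup_residualSigma hmeas hindep hL2)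
  rw [sampleMean_sum]
  filter_upwards [hsum, hrow] with ω hsumω hrowω
  simp only [Pi.sub_apply, Finset.sum_apply, hsumω, hrowω, pitman_eq, Finset.sum_sub_distrib]

end PitmanRows

theorem pitman_superadditive_general
    {Ω : Type*} [MeasureSpace Ω] [IsProbabilityMeasure (ℙ : Measure Ω)]
    {N n : ℕ}
    (x : Fin N → Fin n → Ω → ℝ)
    (hmeas : ∀ k i, Measurable (x k i))
    (hindep : iIndepFun
      (fun p : Fin N × Fin n => x p.1 p.2) ℙ)
    (hL2 : ∀ k i, MemLp (x k i) 2 ℙ) :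
    ∑ k, variance (pitman (x k)) ℙ ≤
      variance (pitman (fun i ω => ∑ k, x k i ω)) ℙ := by
  set y : Fin n → Ω → ℝ := fun i ω => ∑ k, x k i ω
  calc ∑ k, variance (pitman (x k)) ℙ
      = variance (∑ k, pitman (x k)) ℙ :=
        (IndepFun.variance_sum (fun k _ => memLp_pitman (hL2 k))
          fun j _ k _ hjk => indepFun_pitman hmeas hindep hjk).symm
    _ = variance (sampleMean y - ℙ[sampleMean y | ⨆ k, residualSigma (x k)]) ℙ :=
        variance_congr (sum_pitman_ae_eq hmeas hindep hL2)
    _ ≤ variance (sampleMean y - ℙ[sampleMean y | residualSigma y]) ℙ :=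
        variance_sub_condExp_le_of_le (residualSigma_sum_le x)
          (iSup_le fun k => (residualSigma_le_sampleSigma _).trans (sampleSigma_le (hmeas k)))
          (memLp_sampleMean fun i => memLp_finsetSum univ fun k _ => hL2 k i)
    _ = variance (pitman y) ℙ := rfl

/-- **Superadditivity of the variance of Pitman estimators under convolution** (Kagan).
If the rows `x k` are independent samples of size `n` from `F k` with finite variances,
`t_n^{(k)}` is the Pitman estimator from the `k`-th row, and `t_n` is the Pitman estimator
from the sample `y i = Σ_k x k i` of size `n` from `F_1 ∗ … ∗ F_N`, then
`Var(t_n) ≥ Σ_k Var(t_n^{(k)})`. -/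
theorem pitman_superadditive
    {Ω : Type*} [MeasureSpace Ω] [IsProbabilityMeasure (ℙ : Measure Ω)]
    {N n : ℕ} (hN : 1 ≤ N) (hn : 1 ≤ n)
    (x : Fin N → Fin n → Ω → ℝ)
    (hmeas : ∀ k i, Measurable (x k i))
    (hindep : iIndepFun
      (fun p : Fin N × Fin n => x p.1 p.2) ℙ)
    (F : Fin N → Measure ℝ)
    (hdist : ∀ k i, Measure.map (x k i) ℙ = F k)
    (hL2 : ∀ k i, MemLp (x k i) 2 ℙ) :
    ∑ k, variance (pitman (x k)) ℙ ≤
      variance (pitman (fun i ω => ∑ k, x k i ω)) ℙ :=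
  pitman_superadditive_general x hmeas hindep hL2
end

section
/- Let X and Y be independent real random variables whose distributions have densities with respect to Lebesgue measure that are positive Lebesgue-almost everywhere. Let f, g : ℝ → ℝ be locally integrable Borel functions and h : ℝ → ℝ a Borel function such that f(X) + g(Y) = h(X + Y) almost surely. Then f and g are almost everywhere affine with the same slope: there exist constants a, b, c ∈ ℝ such that f(x) = a·x + b for Lebesgue-almost every x and g(y) = a·y + c for Lebesgue-almost every y. -/
/-! Lebesgue measure is absolutely continuous with respect to the laws of `X` and `Y`, whose
densities are a.e. positive, and the law of `(X, Y)` is their product; so the identity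
`f x + g y = h (x + y)` holds for Lebesgue-a.e. `(x, y) ∈ ℝ²`. Fixing a good `y` shows that
`h` is a.e. a translate of `g` plus a constant, hence locally integrable, and that every increment
`h (· + t) - h` is a.e. constant. The continuous average `φ x = ∫ u in x..x + 1, h u` then has
constant increments, so it is affine. Integrating the identity over `y ∈ [0, 1]` gives
`f x = φ x - ∫ y in 0..1, g y` for a.e. `x`, and symmetrically for `g`. -/

open MeasureTheory ProbabilityTheory
open scoped ENNReal

theorem Continuous.exists_eq_mul_add_of_forall_exists_sub_eq {φ : ℝ → ℝ} (hφ : Continuous φ)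
    (hinc : ∀ t, ∃ c, ∀ x, φ (x + t) - φ x = c) : ∃ a b : ℝ, ∀ x, φ x = a * x + b := by
  have hadd : ∀ s t, φ (s + t) - φ 0 = (φ s - φ 0) + (φ t - φ 0) := fun s t => by
    obtain ⟨c, hc⟩ := hinc t
    have hs := hc s
    have h0 := hc 0
    rw [zero_add] at h0
    linarith
  let Φ : ℝ →+ ℝ := AddMonoidHom.mk' (fun x => φ x - φ 0) hadd
  refine ⟨φ 1 - φ 0, φ 0, fun x => ?_⟩
  have hx : φ x - φ 0 = x * (φ 1 - φ 0) := by
    simpa [Φ] using map_real_smul Φ (hφ.sub continuous_const) x 1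
  linarith

theorem continuous_intervalIntegral_self_add {E : Type*} [NormedAddCommGroup E] [NormedSpace ℝ E]
    {h : ℝ → E} (hh : ∀ a b, IntervalIntegrable h volume a b) (r : ℝ) :
    Continuous fun x => ∫ u in x..x + r, h u := by
  have hprim := intervalIntegral.continuous_primitive hh 0
  have hdiff : (fun x => ∫ u in x..x + r, h u) =
      fun x => (∫ u in 0..x + r, h u) - ∫ u in 0..x, h u :=
    funext fun x => (intervalIntegral.integral_interval_sub_left (hh 0 (x + r)) (hh 0 x)).symm
  rw [hdiff]
  exact (hprim.comp (continuous_add_const r)).sub hprim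

theorem exists_intervalIntegral_eq_mul_add_of_ae_sub_eq {h : ℝ → ℝ}
    (hh : ∀ a b, IntervalIntegrable h volume a b)
    (hinc : ∀ t, ∃ c, ∀ᵐ u, h (u + t) - h u = c) :
    ∃ a b : ℝ, ∀ x, ∫ u in x..x + 1, h u = a * x + b := by
  refine (continuous_intervalIntegral_self_add hh 1).exists_eq_mul_add_of_forall_exists_sub_eq
    fun t => ?_
  obtain ⟨c, hc⟩ := hinc t
  refine ⟨c, fun x => ?_⟩
  have hht : IntervalIntegrable (fun u => h (u + t)) volume x (x + 1) := by
    simpa using (hh (x + t) (x + 1 + t)).comp_add_right t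
  calc (∫ u in x + t..x + t + 1, h u) - ∫ u in x..x + 1, h u
      = ∫ u in x..x + 1, (h (u + t) - h u) := by
        rw [intervalIntegral.integral_sub hht (hh _ _), intervalIntegral.integral_comp_add_right,
          add_right_comm]
    _ = ∫ _ in x..x + 1, c := intervalIntegral.integral_congr_ae (hc.mono fun u hu _ => hu)
    _ = c := by simp

section AddEqOnPlane

variable {f g h : ℝ → ℝ}

theorem ae_add_eq_swap
    (heq : ∀ᵐ p ∂(volume : Measure ℝ).prod volume, f p.1 + g p.2 = h (p.1 + p.2)) :
    ∀ᵐ p ∂(volume : Measure ℝ).prod volume, g p.1 + f p.2 = h (p.1 + p.2) := by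
  filter_upwards [Measure.measurePreserving_swap.quasiMeasurePreserving.ae heq] with p hp
  rw [add_comm (g _), add_comm p.1]
  exact hp

theorem exists_ae_sub_eq_of_ae_add_eq
    (heq : ∀ᵐ p ∂(volume : Measure ℝ).prod volume, f p.1 + g p.2 = h (p.1 + p.2)) :
    ∀ t, ∃ c, ∀ᵐ u, h (u + t) - h u = c := by
  intro t
  have hyx := Measure.ae_ae_of_ae_prod (ae_add_eq_swap heq)
  obtain ⟨y, hy, hyt⟩ :=
    (hyx.and ((measurePreserving_add_right volume t).quasiMeasurePreserving.ae hyx)).exists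
  refine ⟨g (y + t) - g y, ?_⟩
  filter_upwards [(measurePreserving_sub_right volume y).quasiMeasurePreserving.ae (hy.and hyt)]
    with u ⟨hu, hut⟩
  rw [add_sub_cancel] at hu
  rw [show y + t + (u - y) = u + t by ring] at hut
  linarith

theorem intervalIntegrable_of_ae_add_eq
    (heq : ∀ᵐ p ∂(volume : Measure ℝ).prod volume, f p.1 + g p.2 = h (p.1 + p.2))
    (hg : LocallyIntegrable g volume) :
    ∀ a b, IntervalIntegrable h volume a b := by
  obtain ⟨x₀, hx₀⟩ := (Measure.ae_ae_of_ae_prod heq).exists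
  have hh : ∀ᵐ s, f x₀ + g (s - x₀) = h s := by
    filter_upwards [(measurePreserving_sub_right volume x₀).quasiMeasurePreserving.ae hx₀]
      with s hs
    rwa [add_sub_cancel] at hs
  intro a b
  have hg' : IntervalIntegrable g volume (a - x₀) (b - x₀) :=
    (hg.integrableOn_isCompact isCompact_uIcc).intervalIntegrable
  exact (intervalIntegrable_const.add (by simpa using hg'.comp_sub_right x₀)).congr_ae
    (ae_restrict_of_ae hh)

theorem ae_eq_intervalIntegral_sub_of_ae_add_eq
    (heq : ∀ᵐ p ∂(volume : Measure ℝ).prod volume, f p.1 + g p.2 = h (p.1 + p.2))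
    (hg : LocallyIntegrable g volume) :
    ∀ᵐ x, f x = (∫ u in x..x + 1, h u) - ∫ y in 0..1, g y := by
  filter_upwards [Measure.ae_ae_of_ae_prod heq] with x hx
  have hint : (∫ y in (0 : ℝ)..1, (f x + g y)) = ∫ y in (0 : ℝ)..1, h (x + y) :=
    intervalIntegral.integral_congr_ae (hx.mono fun y hy _ => hy)
  rw [intervalIntegral.integral_add intervalIntegrable_const
    (hg.integrableOn_isCompact isCompact_uIcc).intervalIntegrable,
    intervalIntegral.integral_comp_add_left] at hint
  simp only [intervalIntegral.integral_const, sub_zero, one_smul, add_zero] at hint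
  linarith

theorem exists_ae_eq_mul_add_of_ae_add_eq
    (heq : ∀ᵐ p ∂(volume : Measure ℝ).prod volume, f p.1 + g p.2 = h (p.1 + p.2))
    (hf : LocallyIntegrable f volume) (hg : LocallyIntegrable g volume) :
    ∃ a b c : ℝ, (∀ᵐ x, f x = a * x + b) ∧ (∀ᵐ y, g y = a * y + c) := by
  obtain ⟨a, b, hφ⟩ := exists_intervalIntegral_eq_mul_add_of_ae_sub_eq
    (intervalIntegrable_of_ae_add_eq heq hg) (exists_ae_sub_eq_of_ae_add_eq heq)
  refine ⟨a, b - ∫ y in 0..1, g y, b - ∫ x in 0..1, f x, ?_, ?_⟩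
  · filter_upwards [ae_eq_intervalIntegral_sub_of_ae_add_eq heq hg] with x hx
    rw [hx, hφ, add_sub_assoc]
  · filter_upwards [ae_eq_intervalIntegral_sub_of_ae_add_eq (ae_add_eq_swap heq) hf] with y hy
    rw [hy, hφ, add_sub_assoc]

end AddEqOnPlane

theorem ProbabilityTheory.IndepFun.ae_prod_of_ae {Ω α β : Type*} [MeasurableSpace Ω]
    [MeasurableSpace α] [MeasurableSpace β] {μ : Measure Ω} [IsFiniteMeasure μ]
    {X : Ω → α} {Y : Ω → β} (hXY : IndepFun X Y μ) (hX : AEMeasurable X μ)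
    (hY : AEMeasurable Y μ) {ν₁ : Measure α} {ν₂ : Measure β} (h₁ : ν₁ ≪ μ.map X)
    (h₂ : ν₂ ≪ μ.map Y) {P : α × β → Prop} (hP : MeasurableSet {p | P p})
    (hPXY : ∀ᵐ ω ∂μ, P (X ω, Y ω)) : ∀ᵐ p ∂ν₁.prod ν₂, P p := by
  refine (h₁.prod h₂).ae_le ?_
  rw [← hXY.map_prod_eq_prod_map_map hX hY]
  exact (ae_map_iff (hX.prodMk hY) hP).mpr hPXY

/-- **A Cauchy-type functional equation for independent random variables.**
Let `X`, `Y` be independent real random variables whose laws have Lebesgue-a.e. positive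
densities, and let `f`, `g` be locally integrable Borel functions and `h` a Borel function
with `f(X) + g(Y) = h(X + Y)` almost surely. Then `f` and `g` are a.e. affine with a common
slope: there are `a b c : ℝ` with `f x = a·x + b` for a.e. `x` and `g y = a·y + c`
for a.e. `y`. -/
theorem cauchy_equation_random_variables
    {Ω : Type*} [MeasureSpace Ω] [IsProbabilityMeasure (ℙ : Measure Ω)]
    (X Y : Ω → ℝ) (hX : Measurable X) (hY : Measurable Y)
    (hindep : IndepFun X Y ℙ)
    (pX pY : ℝ → ℝ≥0∞) (hpXmeas : Measurable pX) (hpYmeas : Measurable pY)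
    (hlawX : Measure.map X ℙ = (volume : Measure ℝ).withDensity pX)
    (hlawY : Measure.map Y ℙ = (volume : Measure ℝ).withDensity pY)
    (hposX : ∀ᵐ u ∂(volume : Measure ℝ), 0 < pX u)
    (hposY : ∀ᵐ u ∂(volume : Measure ℝ), 0 < pY u)
    (f g h : ℝ → ℝ) (hf : Measurable f) (hg : Measurable g) (hh : Measurable h)
    (hfloc : LocallyIntegrable f (volume : Measure ℝ))
    (hgloc : LocallyIntegrable g (volume : Measure ℝ))
    (heq : ∀ᵐ ω ∂(ℙ : Measure Ω), f (X ω) + g (Y ω) = h (X ω + Y ω)) :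
    ∃ a b c : ℝ,
      (∀ᵐ u ∂(volume : Measure ℝ), f u = a * u + b) ∧
      (∀ᵐ u ∂(volume : Measure ℝ), g u = a * u + c) := by
  have hacX : (volume : Measure ℝ) ≪ Measure.map X ℙ := hlawX ▸
    withDensity_absolutelyContinuous' hpXmeas.aemeasurable (hposX.mono fun _ hu => hu.ne')
  have hacY : (volume : Measure ℝ) ≪ Measure.map Y ℙ := hlawY ▸
    withDensity_absolutelyContinuous' hpYmeas.aemeasurable (hposY.mono fun _ hu => hu.ne')
  have hplane := hindep.ae_prod_of_ae hX.aemeasurable hY.aemeasurable hacX hacY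
    (P := fun p => f p.1 + g p.2 = h (p.1 + p.2))
    (measurableSet_eq_fun (by fun_prop) (by fun_prop)) heq
  exact exists_ae_eq_mul_add_of_ae_add_eq hplane hfloc hgloc
end

section
/- There exist independent real random variables X and Y, each having a non-degenerate, nonatomic (continuous) distribution, together with Borel measurable functions φ, ψ : ℝ → ℝ, such that X = φ(X + Y) almost surely and Y = ψ(X + Y) almost surely. Consequently, for arbitrary Borel measurable functions f, g : ℝ → ℝ there is a Borel measurable h : ℝ → ℝ with f(X) + g(Y) = h(X + Y) almost surely, so the Cauchy-type equation f(X) + g(Y) = h(X + Y) for independent random variables admits nonlinear solutions. (Such X and Y are obtained by splitting the binary digits of a uniform random variable on (0,1) into the even-indexed and odd-indexed digits.) -/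
/-!
Let `U`, `V` be independent and uniform on `[0,1)` and let `S` be the number whose binary digits
in even positions are those of `U` and in odd positions those of `V`; the law of `S` serves as the
probability space. The even-position part `X s` of `s` and the rest `Y s = s - X s` become, under
this law, images of `U` and `V` by Borel maps injective on `[0,1)`, so they are independent and
nonatomic, while `X + Y` is the identity. Reading the digits back is only valid for expansions
that do not end in `1 1 1 …`; this holds for the digits of any `u ∈ [0,1)` and survives
interleaving.
-/
open MeasureTheory ProbabilityTheory Filter

theorem Filter.frequently_atTop_succ {p : ℕ → Prop} (h : ∃ᶠ n in atTop, p n) :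
    ∃ᶠ n in atTop, p (n + 1) :=
  frequently_map.1 (by rwa [map_add_atTop_eq_nat])

namespace Real

variable {b : ℕ}

theorem ofDigits_lt_one {c : ℕ → Fin b} {n : ℕ} (hn : (c n : ℕ) + 1 < b) : ofDigits c < 1 := by
  have hb : 1 < b := by omega
  rw [← ofDigits_const_last_eq_one' hb]
  refine Summable.tsum_lt_tsum (i := n) (fun i => ?_) ?_ summable_ofDigitsTerm
    summable_ofDigitsTerm
  · simp only [ofDigitsTerm]
    gcongr
    exact Nat.le_sub_one_of_lt (c i).isLt
  · simp only [ofDigitsTerm]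
    gcongr
    omega

theorem ofDigits_add {x y z : ℕ → Fin b} (h : ∀ i, (z i : ℕ) = x i + y i) :
    ofDigits z = ofDigits x + ofDigits y := by
  simp only [ofDigits]
  rw [← Summable.tsum_add summable_ofDigitsTerm summable_ofDigitsTerm]
  congr 1 with i
  simp only [ofDigitsTerm, h]
  push_cast
  ring

theorem mul_ofDigits (c : ℕ → Fin b) :
    b * ofDigits c = c 0 + ofDigits fun i => c (i + 1) := by
  have hb : (b : ℝ) ≠ 0 := by exact_mod_cast (Fin.pos (c 0)).ne'
  rw [ofDigits_eq_sum_add_ofDigits c 1]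
  simp only [Finset.range_one, Finset.sum_singleton, ofDigitsTerm, zero_add, pow_one]
  field_simp

theorem digits_succ [NeZero b] (x : ℝ) (n : ℕ) : digits x b (n + 1) = digits (b * x) b n := by
  simp only [digits, pow_succ]
  ring_nf

theorem digits_natCast_add [NeZero b] {x : ℝ} (hx : 0 ≤ x) (k n : ℕ) :
    digits (k + x) b n = digits x b n := by
  simp only [digits, add_mul]
  rw [show (k : ℝ) * b ^ (n + 1) = ((k * b ^ n * b : ℕ) : ℝ) by push_cast; ring, add_comm,
    Nat.floor_add_natCast (by positivity)]
  ext
  simp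

theorem digits_ofDigits [NeZero b] {c : ℕ → Fin b} (hc : ∃ᶠ n in atTop, (c n : ℕ) + 1 < b) :
    digits (ofDigits c) b = c := by
  funext n
  induction n generalizing c with
  | zero =>
    obtain ⟨m, hm⟩ := (frequently_atTop_succ hc).exists
    have hfloor : ⌊ofDigits c * b⌋₊ = c 0 := by
      rw [mul_comm, mul_ofDigits,
        Nat.floor_eq_iff (add_nonneg (Nat.cast_nonneg _) (ofDigits_nonneg _))]
      exact ⟨by simp [ofDigits_nonneg],
        by simpa using ofDigits_lt_one (c := fun i => c (i + 1)) hm⟩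
    ext
    simp [digits, hfloor]
  | succ n ih =>
    rw [digits_succ, mul_ofDigits, digits_natCast_add (ofDigits_nonneg _),
      ih (frequently_atTop_succ hc)]

theorem frequently_digits_add_one_lt [NeZero b] (hb : 1 < b) {x : ℝ} (hx : x ∈ Set.Ico 0 1) :
    ∃ᶠ n in atTop, (digits x b n : ℕ) + 1 < b := by
  intro hlast
  obtain ⟨N, hN⟩ := eventually_atTop.1 hlast
  have htail : (fun i => digits x b (i + N)) = fun _ => ⟨b - 1, Nat.sub_one_lt_of_lt hb⟩ := by
    funext i
    ext
    have := (digits x b (i + N)).isLt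
    have := hN (i + N) (by omega)
    simp only
    omega
  have hsplit := ofDigits_eq_sum_add_ofDigits (digits x b) N
  rw [ofDigits_digits hb hx, htail, ofDigits_const_last_eq_one' hb, mul_one] at hsplit
  have hx_eq : (b : ℝ) ^ N * x = ⌊(b : ℝ) ^ N * x⌋₊ + 1 := by
    rw [← ofDigits_digits_sum_eq hx N, ← mul_inv_cancel₀ (pow_ne_zero N (NeZero.ne (b : ℝ))),
      ← mul_add, ← hsplit]
  linarith [Nat.lt_floor_add_one ((b : ℝ) ^ N * x)]

theorem measurable_digits [NeZero b] : Measurable fun x : ℝ => digits x b :=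
  measurable_pi_lambda _ fun _ =>
    Measurable.of_discrete.comp (Nat.measurable_floor.comp (measurable_id.mul_const _))

theorem measurable_ofDigits : Measurable (ofDigits (b := b)) :=
  continuous_ofDigits.measurable

end Real

theorem MeasureTheory.nullSingletonClass_map_restrict {α β : Type*} [MeasurableSpace α]
    [MeasurableSpace β] [MeasurableSingletonClass β] {μ : Measure α} [NullSingletonClass μ]
    {s : Set α} {f : α → β} (hf : Measurable f) (hinj : s.InjOn f) :
    NullSingletonClass ((μ.restrict s).map f) := by
  refine ⟨fun y => ?_⟩
  rw [Measure.map_apply hf (measurableSet_singleton y),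
    Measure.restrict_apply (hf (measurableSet_singleton y))]
  exact Set.Subsingleton.measure_zero
    (fun a ha a' ha' => hinj ha.2 ha'.2 (ha.1.trans ha'.1.symm)) μ

theorem MeasureTheory.Measure.ne_dirac {α : Type*} [MeasurableSpace α]
    [MeasurableSingletonClass α] (μ : Measure α) [NullSingletonClass μ] (x : α) :
    μ ≠ dirac x := fun h => by
  simpa [h] using measure_singleton (μ := μ) x

open Real

namespace BinarySplit

def spread (r : ℕ) (a : ℕ → Fin 2) : ℕ → Fin 2 := fun k => if k % 2 = r then a (k / 2) else 0

def interleave (a a' : ℕ → Fin 2) : ℕ → Fin 2 :=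
  fun k => if k % 2 = 0 then a (k / 2) else a' (k / 2)

theorem spread_two_mul_add {r : ℕ} (hr : r < 2) (a : ℕ → Fin 2) (n : ℕ) :
    spread r a (2 * n + r) = a n := by
  have h1 : (2 * n + r) % 2 = r := by omega
  have h2 : (2 * n + r) / 2 = n := by omega
  simp [spread, h1, h2]

theorem interleave_two_mul (a a' : ℕ → Fin 2) (n : ℕ) : interleave a a' (2 * n) = a n := by
  simp [interleave]

theorem ofDigits_interleave (a a' : ℕ → Fin 2) :
    ofDigits (interleave a a') = ofDigits (spread 0 a) + ofDigits (spread 1 a') :=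
  ofDigits_add fun k => by
    rcases Nat.mod_two_eq_zero_or_one k with h | h <;> simp [interleave, spread, h]

theorem frequently_spread_add_one_lt {r : ℕ} (hr : r < 2) (a : ℕ → Fin 2) :
    ∃ᶠ k in atTop, ((spread r a k : Fin 2) : ℕ) + 1 < 2 :=
  frequently_atTop.2 fun N => ⟨2 * N + (1 - r), by omega, by
    have h : (2 * N + (1 - r)) % 2 ≠ r := by omega
    simp only [spread, if_neg h]; decide⟩

theorem frequently_interleave_add_one_lt {a : ℕ → Fin 2}
    (ha : ∃ᶠ n in atTop, (a n : ℕ) + 1 < 2) (a' : ℕ → Fin 2) :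
    ∃ᶠ k in atTop, (interleave a a' k : ℕ) + 1 < 2 :=
  frequently_atTop.2 fun N => by
    obtain ⟨n, hn, h⟩ := frequently_atTop.1 ha N
    exact ⟨2 * n, by omega, by rwa [interleave_two_mul]⟩

theorem measurable_spread (r : ℕ) : Measurable (spread r) :=
  measurable_pi_lambda _ fun k => by
    by_cases h : k % 2 = r
    · simpa [spread, h] using measurable_pi_apply (k / 2)
    · simp [spread, h]

noncomputable def embed (r : ℕ) (u : ℝ) : ℝ := ofDigits (spread r (digits u 2))

noncomputable def evenPart (s : ℝ) : ℝ := ofDigits (spread 0 fun n => digits s 2 (2 * n))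

theorem digits_embed {r : ℕ} (hr : r < 2) (u : ℝ) :
    digits (embed r u) 2 = spread r (digits u 2) :=
  digits_ofDigits (frequently_spread_add_one_lt hr _)

theorem injOn_embed {r : ℕ} (hr : r < 2) : Set.InjOn (embed r) (Set.Ico 0 1) := by
  intro u hu v hv huv
  have hdigits : digits u 2 = digits v 2 := funext fun n => by
    rw [← spread_two_mul_add hr (digits u 2), ← digits_embed hr, huv, digits_embed hr,
      spread_two_mul_add hr]
  rw [← ofDigits_digits one_lt_two hu, hdigits, ofDigits_digits one_lt_two hv]

theorem evenPart_embed_add_embed {u : ℝ} (hu : u ∈ Set.Ico 0 1) (v : ℝ) :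
    evenPart (embed 0 u + embed 1 v) = embed 0 u := by
  rw [embed, embed, ← ofDigits_interleave, evenPart,
    digits_ofDigits
      (frequently_interleave_add_one_lt (frequently_digits_add_one_lt one_lt_two hu) _)]
  simp only [interleave_two_mul]

@[fun_prop]
theorem measurable_embed (r : ℕ) : Measurable (embed r) :=
  measurable_ofDigits.comp ((measurable_spread r).comp measurable_digits)

@[fun_prop]
theorem measurable_evenPart : Measurable evenPart :=
  measurable_ofDigits.comp ((measurable_spread 0).comp
    (measurable_pi_lambda _ fun n => (measurable_pi_apply (2 * n)).comp measurable_digits))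

noncomputable def uniformIco : Measure ℝ := volume.restrict (Set.Ico 0 1)

instance : IsProbabilityMeasure uniformIco :=
  ⟨by simp [uniformIco]⟩

noncomputable def splitLaw : Measure ℝ :=
  (uniformIco.prod uniformIco).map fun p => embed 0 p.1 + embed 1 p.2

instance : IsProbabilityMeasure splitLaw :=
  Measure.isProbabilityMeasure_map (by fun_prop)

theorem map_evenPart_prod_splitLaw :
    splitLaw.map (fun s => (evenPart s, s - evenPart s)) =
      (uniformIco.map (embed 0)).prod (uniformIco.map (embed 1)) := by
  rw [splitLaw, Measure.map_map (by fun_prop) (by fun_prop),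
    Measure.map_prod_map _ _ (measurable_embed 0) (measurable_embed 1)]
  refine Measure.map_congr ?_
  rw [uniformIco, Measure.prod_restrict]
  filter_upwards [ae_restrict_mem (measurableSet_Ico.prod measurableSet_Ico)] with p hp
  simp [evenPart_embed_add_embed hp.1, Prod.map]

instance (r : ℕ) : IsProbabilityMeasure (uniformIco.map (embed r)) :=
  Measure.isProbabilityMeasure_map (measurable_embed r).aemeasurable

theorem nullSingletonClass_map_embed {r : ℕ} (hr : r < 2) :
    NullSingletonClass (uniformIco.map (embed r)) :=
  nullSingletonClass_map_restrict (measurable_embed r) (injOn_embed hr)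

end BinarySplit

/-- **Nonlinear solutions of the Cauchy-type equation for independent random variables.**
There exist a probability measure `P` (on the real line, serving as the underlying
probability space) and independent random variables `X`, `Y`, each with a nonatomic,
non-degenerate distribution, together with Borel functions `φ`, `ψ` such that
`X = φ(X + Y)` a.s. and `Y = ψ(X + Y)` a.s.; consequently, for arbitrary Borel `f`, `g`
there is a Borel `h` with `f(X) + g(Y) = h(X + Y)` a.s.
(Such `X` and `Y` are obtained by splitting the binary digits of a uniform random
variable on `(0,1)` into even-indexed and odd-indexed digits.) -/
theorem cauchy_equation_nonlinear_solutions :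
    ∃ (P : Measure ℝ) (X Y φ ψ : ℝ → ℝ),
      IsProbabilityMeasure P ∧
      Measurable X ∧ Measurable Y ∧
      IndepFun X Y P ∧
      (∀ u : ℝ, Measure.map X P {u} = 0) ∧
      (∀ u : ℝ, Measure.map Y P {u} = 0) ∧
      (¬ ∃ c : ℝ, Measure.map X P = Measure.dirac c) ∧
      (¬ ∃ c : ℝ, Measure.map Y P = Measure.dirac c) ∧
      Measurable φ ∧ Measurable ψ ∧
      (∀ᵐ ω ∂P, X ω = φ (X ω + Y ω)) ∧
      (∀ᵐ ω ∂P, Y ω = ψ (X ω + Y ω)) ∧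
      (∀ f g : ℝ → ℝ, Measurable f → Measurable g →
        ∃ h : ℝ → ℝ, Measurable h ∧ ∀ᵐ ω ∂P, f (X ω) + g (Y ω) = h (X ω + Y ω)) := by
  open BinarySplit in
  set X := evenPart
  set Y : ℝ → ℝ := fun s => s - evenPart s
  have hsum (ω : ℝ) : X ω + Y ω = ω := add_sub_cancel _ _
  have hX : Measurable X := measurable_evenPart
  have hY : Measurable Y := by fun_prop
  have := nullSingletonClass_map_embed two_pos
  have := nullSingletonClass_map_embed one_lt_two
  have hlawX : splitLaw.map X = uniformIco.map (embed 0) := by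
    rw [← Measure.fst_map_prodMk hY, map_evenPart_prod_splitLaw, Measure.fst_prod]
  have hlawY : splitLaw.map Y = uniformIco.map (embed 1) := by
    rw [← Measure.snd_map_prodMk hX, map_evenPart_prod_splitLaw, Measure.snd_prod]
  refine ⟨splitLaw, X, Y, X, Y, inferInstance, hX, hY, ?_, hlawX ▸ measure_singleton,
    hlawY ▸ measure_singleton, fun ⟨c, hc⟩ => Measure.ne_dirac _ c (hlawX ▸ hc),
    fun ⟨c, hc⟩ => Measure.ne_dirac _ c (hlawY ▸ hc), hX, hY, .of_forall fun ω => by rw [hsum],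
    .of_forall fun ω => by rw [hsum], fun f g hf hg => ⟨fun s => f (X s) + g (Y s), by fun_prop,
    .of_forall fun ω => by rw [hsum]⟩⟩
  rw [indepFun_iff_map_prod_eq_prod_map_map hX.aemeasurable hY.aemeasurable,
    map_evenPart_prod_splitLaw, hlawX, hlawY]
end
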